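/- arXiv:1609.03863 — 6 statements merged into one kernel-verified Lean document; each statement's English description precedes it below -/
import Mathlib

section
/- (Calabi–Markus phenomenon.) Let n ≥ 1 and let Γ be a group of linear automorphisms of ℝ^{n+2} each preserving the quadratic form q_{1,n+1}. If the action of Γ on the de Sitter quadric dS^{1,n} = {x ∈ ℝ^{n+2} : q_{1,n+1}(x) = 1} is properly discontinuous — i.e. for every compact subset K of dS^{1,n}, the set {γ ∈ Γ : γ(K) ∩ K ≠ ∅} is finite — then Γ is finite. -/
/-- The quadratic form `q_{1,n+1}` of signature `(1,n+1)` on `ℝ^{n+2}`. -/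
def qOneForm (n : ℕ) (x : Fin (n + 2) → ℝ) : ℝ :=
  -(x 0) ^ 2 + ∑ i : Fin (n + 1), (x i.succ) ^ 2

/-- De Sitter space `dS^{1,n}`, as the quadric `{q_{1,n+1} = 1}` in `ℝ^{n+2}`. -/
def deSitter (n : ℕ) : Set (Fin (n + 2) → ℝ) := {x | qOneForm n x = 1}

lemma qOneForm_smul (n : ℕ) (c : ℝ) (x : Fin (n + 2) → ℝ) :
    qOneForm n (c • x) = c ^ 2 * qOneForm n x := by
  simp only [qOneForm, Pi.smul_apply, smul_eq_mul, mul_pow, mul_add, Finset.mul_sum]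
  ring

lemma continuous_qOneForm (n : ℕ) : Continuous (qOneForm n) := by
  unfold qOneForm
  exact ((continuous_apply (0 : Fin (n+2))).pow 2).neg.add
    (continuous_finset_sum _ fun i _ => (continuous_apply i.succ).pow 2)

/-- Calabi–Markus phenomenon: a group of linear isometries of `q_{1,n+1}` acting
properly discontinuously on de Sitter space `dS^{1,n}` is finite. -/
theorem calabi_markus (n : ℕ) (hn : 1 ≤ n)
    (Γ : Subgroup ((Fin (n + 2) → ℝ) ≃ₗ[ℝ] (Fin (n + 2) → ℝ)))
    (hiso : ∀ γ ∈ Γ, ∀ x, qOneForm n (γ x) = qOneForm n x)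
    (hproper : ∀ K : Set (Fin (n + 2) → ℝ), K ⊆ deSitter n → IsCompact K →
      {γ : (Fin (n + 2) → ℝ) ≃ₗ[ℝ] (Fin (n + 2) → ℝ) |
        γ ∈ Γ ∧ ((γ : (Fin (n + 2) → ℝ) → (Fin (n + 2) → ℝ)) '' K ∩ K).Nonempty}.Finite) :
    (Γ : Set ((Fin (n + 2) → ℝ) ≃ₗ[ℝ] (Fin (n + 2) → ℝ))).Finite := by
  classical
  set E := Fin (n + 2) → ℝ
  -- the compact "equator" sphere
  set K : Set E := {x : E | x 0 = 0 ∧ qOneForm n x = 1} with hK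
  have hKsub : K ⊆ deSitter n := fun x hx => hx.2
  have hKclosed : IsClosed K := by
    have h1 : IsClosed {x : E | x 0 = 0} :=
      isClosed_eq (continuous_apply 0) continuous_const
    have h2 : IsClosed {x : E | qOneForm n x = 1} :=
      isClosed_eq (continuous_qOneForm n) continuous_const
    exact h1.inter h2
  have hKbdd : Bornology.IsBounded K := by
    apply Bornology.IsBounded.subset (Metric.isBounded_closedBall (x := (0 : E)) (r := 1))
    intro x hx
    obtain ⟨h0, hq⟩ := hx
    have hsum : ∑ i : Fin (n + 1), (x i.succ) ^ 2 = 1 := by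
      have := hq
      simp only [qOneForm, h0] at this
      linarith [this]
    have hcoord : ∀ i : Fin (n + 2), ‖x i‖ ≤ 1 := by
      intro i
      induction i using Fin.cases with
      | zero => simp [h0]
      | succ j =>
        have hle : (x j.succ) ^ 2 ≤ 1 :=
          le_trans (Finset.single_le_sum (f := fun i : Fin (n+1) => (x i.succ) ^ 2)
            (fun i _ => sq_nonneg _) (Finset.mem_univ j)) (le_of_eq hsum)
        rw [Real.norm_eq_abs]
        exact abs_le.2 ⟨by nlinarith, by nlinarith⟩
    simp only [Metric.mem_closedBall, dist_zero_right]
    exact pi_norm_le_iff_of_nonneg zero_le_one |>.2 hcoord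
  have hKcompact : IsCompact K := Metric.isCompact_of_isClosed_isBounded hKclosed hKbdd
  -- the hyperplane x 0 = 0
  set W : Submodule ℝ E := LinearMap.ker (LinearMap.proj (R := ℝ) (φ := fun _ : Fin (n+2) => ℝ) 0) with hW
  have hWmem : ∀ x : E, x ∈ W ↔ x 0 = 0 := by
    intro x; exact Iff.rfl
  have hWrank : Module.finrank ℝ W = n + 1 := by
    have hsurj : Function.Surjective (LinearMap.proj (R := ℝ) (φ := fun _ : Fin (n+2) => ℝ) 0) := by
      intro y; exact ⟨fun _ => y, rfl⟩
    have := LinearMap.finrank_range_add_finrank_ker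
      (LinearMap.proj (R := ℝ) (φ := fun _ : Fin (n+2) => ℝ) 0)
    rw [LinearMap.range_eq_top.2 hsurj] at this
    simp only [finrank_top, Module.finrank_self, Module.finrank_pi,
      Fintype.card_fin] at this
    have h2 : 1 + Module.finrank ℝ W = n + 2 := this
    omega
  -- every element of Γ moves K onto a set meeting K
  have hmeet : ∀ γ : E ≃ₗ[ℝ] E, γ ∈ Γ →
      ((γ : E → E) '' K ∩ K).Nonempty := by
    intro γ hγ
    set V : Submodule ℝ E := W.map (γ : E →ₗ[ℝ] E) with hV
    have hVrank : Module.finrank ℝ V = n + 1 := by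
      rw [hV, LinearEquiv.finrank_map_eq]
      exact hWrank
    -- V ⊓ W is nonzero
    have hrank : 1 ≤ Module.finrank ℝ ↥(V ⊓ W) := by
      have hsum := Submodule.finrank_sup_add_finrank_inf_eq V W
      have hle : Module.finrank ℝ ↥(V ⊔ W) ≤ n + 2 := by
        have := Submodule.finrank_le (V ⊔ W)
        have hE : Module.finrank ℝ (Fin (n + 2) → ℝ) = n + 2 := by
          simp [Module.finrank_pi]
        have hE' : Module.finrank ℝ E = n + 2 := hE
        omega
      omega
    have hne : (V ⊓ W : Submodule ℝ E) ≠ ⊥ := by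
      intro hbot
      rw [hbot] at hrank
      simp at hrank
    obtain ⟨v, hv, hv0⟩ := Submodule.exists_mem_ne_zero_of_ne_bot hne
    have hvW : v ∈ W := hv.2
    have hvV : v ∈ V := hv.1
    have hv0' : v 0 = 0 := (hWmem v).1 hvW
    -- q v > 0
    have hqpos : 0 < qOneForm n v := by
      have hsumnn : 0 ≤ ∑ i : Fin (n + 1), (v i.succ) ^ 2 :=
        Finset.sum_nonneg fun i _ => sq_nonneg _
      rcases lt_or_eq_of_le hsumnn with hlt | heq
      · simp [qOneForm, hv0']; linarith
      · exfalso
        apply hv0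
        funext i
        induction i using Fin.cases with
        | zero => exact hv0'
        | succ j =>
          have := Finset.sum_eq_zero_iff_of_nonneg (fun i _ => sq_nonneg ((v i.succ)))
            |>.1 heq.symm j (Finset.mem_univ j)
          exact pow_eq_zero_iff (n := 2) (by norm_num) |>.1 this
    set c : ℝ := (Real.sqrt (qOneForm n v))⁻¹ with hc
    have hsq : Real.sqrt (qOneForm n v) > 0 := Real.sqrt_pos.2 hqpos
    set w : E := c • v with hw
    have hqw : qOneForm n w = 1 := by
      rw [hw, qOneForm_smul, hc]
      rw [inv_pow, Real.sq_sqrt hqpos.le]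
      field_simp
    have hw0 : w 0 = 0 := by rw [hw]; show c * v 0 = 0; rw [hv0', mul_zero]
    have hwK : w ∈ K := ⟨hw0, hqw⟩
    have hwV : w ∈ V := V.smul_mem c hvV
    obtain ⟨u, huW, huw⟩ := hwV
    refine ⟨w, ⟨u, ?_, huw⟩, hwK⟩
    constructor
    · -- u 0 = 0
      exact (hWmem u).1 huW
    · -- qOneForm n u = 1
      have := hiso γ hγ u
      have huw' : γ u = w := huw
      rw [huw'] at this
      rw [← this, hqw]
  have hfin := hproper K hKsub hKcompact
  apply hfin.subset
  intro γ hγ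
  exact ⟨hγ, hmeet γ hγ⟩
end

section
/- Let A, C ∈ M₂(ℝ) with det A = det C = 1 and Tr(A·C⁻¹) = 0, and for t ∈ ℝ set A_t = (cos t)·A + (sin t)·C and C_t = (−sin t)·A + (cos t)·C. Then det A_t = det C_t = 1, Tr(A_t·C_t⁻¹) = 0, and moreover A_t·C_t⁻¹ = A·C⁻¹ and C_t⁻¹·A_t = C⁻¹·A for all t. (The geodesic flow Φᵗ on the unit tangent bundle of AdS^{1,2} preserves the defining conditions, and the map (A,C) ↦ (J_L, J_R) = (AC⁻¹, C⁻¹A) is constant along the flow.) -/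
open Matrix Real

lemma inv_eq_adj_of_det_one (M : Matrix (Fin 2) (Fin 2) ℝ) (h : M.det = 1) :
    M⁻¹ = M.adjugate := by
  rw [Matrix.inv_def, h, Ring.inverse_one, one_smul]

/-- The geodesic flow `Φᵗ(A,C) = (cos t·A + sin t·C, -sin t·A + cos t·C)` on the
unit tangent bundle of `AdS^{1,2} = SL(2,ℝ)` preserves the defining conditions
`det A = det C = 1`, `Tr(A C⁻¹) = 0`, and the map `(A,C) ↦ (AC⁻¹, C⁻¹A)` is
constant along the flow. -/
theorem geodesic_flow_invariants (A C : Matrix (Fin 2) (Fin 2) ℝ)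
    (hA : A.det = 1) (hC : C.det = 1) (hAC : (A * C⁻¹).trace = 0) (t : ℝ) :
    (Real.cos t • A + Real.sin t • C).det = 1 ∧
    ((-Real.sin t) • A + Real.cos t • C).det = 1 ∧
    ((Real.cos t • A + Real.sin t • C) *
        ((-Real.sin t) • A + Real.cos t • C)⁻¹).trace = 0 ∧
    (Real.cos t • A + Real.sin t • C) * ((-Real.sin t) • A + Real.cos t • C)⁻¹
        = A * C⁻¹ ∧
    ((-Real.sin t) • A + Real.cos t • C)⁻¹ * (Real.cos t • A + Real.sin t • C)
        = C⁻¹ * A := by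
  have hpyth : Real.sin t ^ 2 + Real.cos t ^ 2 = 1 := Real.sin_sq_add_cos_sq t
  rw [inv_eq_adj_of_det_one C hC] at hAC
  have hA' : A 0 0 * A 1 1 - A 0 1 * A 1 0 = 1 := by
    rw [Matrix.det_fin_two] at hA; linarith
  have hC' : C 0 0 * C 1 1 - C 0 1 * C 1 0 = 1 := by
    rw [Matrix.det_fin_two] at hC; linarith
  have hT : A 0 0 * C 1 1 - A 0 1 * C 1 0 - A 1 0 * C 0 1 + A 1 1 * C 0 0 = 0 := by
    simp [Matrix.trace_fin_two, Matrix.mul_apply, Fin.sum_univ_two,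
      Matrix.adjugate_fin_two] at hAC
    linarith
  have hdA : (Real.cos t • A + Real.sin t • C).det = 1 := by
    simp only [Matrix.det_fin_two, Matrix.add_apply, Matrix.smul_apply, smul_eq_mul]
    linear_combination (Real.cos t)^2 * hA' + (Real.sin t)^2 * hC' +
      (Real.cos t * Real.sin t) * hT + hpyth
  have hdC : ((-Real.sin t) • A + Real.cos t • C).det = 1 := by
    simp only [Matrix.det_fin_two, Matrix.add_apply, Matrix.smul_apply, smul_eq_mul]
    linear_combination (Real.sin t)^2 * hA' + (Real.cos t)^2 * hC' -
      (Real.cos t * Real.sin t) * hT + hpyth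
  have hinv : ((-Real.sin t) • A + Real.cos t • C)⁻¹
      = ((-Real.sin t) • A + Real.cos t • C).adjugate :=
    inv_eq_adj_of_det_one _ hdC
  have hmain : (Real.cos t • A + Real.sin t • C) *
      ((-Real.sin t) • A + Real.cos t • C)⁻¹ = A * C⁻¹ := by
    rw [hinv, inv_eq_adj_of_det_one C hC]
    ext i j
    fin_cases i <;> fin_cases j <;>
      simp [Matrix.mul_apply, Fin.sum_univ_two, Matrix.adjugate_fin_two,
        Matrix.add_apply, Matrix.smul_apply]
    · linear_combination (-(Real.cos t * Real.sin t)) * hA' +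
        (Real.cos t * Real.sin t) * hC' - (Real.sin t)^2 * hT +
        (A 0 0 * C 1 1 - A 0 1 * C 1 0) * hpyth
    · linear_combination (A 0 1 * C 0 0 - A 0 0 * C 0 1) * hpyth
    · linear_combination (A 1 0 * C 1 1 - A 1 1 * C 1 0) * hpyth
    · linear_combination (-(Real.cos t * Real.sin t)) * hA' +
        (Real.cos t * Real.sin t) * hC' - (Real.sin t)^2 * hT +
        (A 1 1 * C 0 0 - A 1 0 * C 0 1) * hpyth
  have hmain2 : ((-Real.sin t) • A + Real.cos t • C)⁻¹ *
      (Real.cos t • A + Real.sin t • C) = C⁻¹ * A := by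
    rw [hinv, inv_eq_adj_of_det_one C hC]
    ext i j
    fin_cases i <;> fin_cases j <;>
      simp [Matrix.mul_apply, Fin.sum_univ_two, Matrix.adjugate_fin_two,
        Matrix.add_apply, Matrix.smul_apply]
    · linear_combination (-(Real.cos t * Real.sin t)) * hA' +
        (Real.cos t * Real.sin t) * hC' - (Real.sin t)^2 * hT +
        (A 0 0 * C 1 1 - A 1 0 * C 0 1) * hpyth
    · linear_combination (A 0 1 * C 1 1 - A 1 1 * C 0 1) * hpyth
    · linear_combination (A 1 0 * C 0 0 - A 0 0 * C 1 0) * hpyth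
    · linear_combination (-(Real.cos t * Real.sin t)) * hA' +
        (Real.cos t * Real.sin t) * hC' - (Real.sin t)^2 * hT +
        (A 1 1 * C 0 0 - A 0 1 * C 1 0) * hpyth
  refine ⟨hdA, hdC, ?_, hmain, hmain2⟩
  rw [hmain, inv_eq_adj_of_det_one C hC]
  exact hAC
end

section
/- Let A, C ∈ M₂(ℝ) with det A = det C = 1 and Tr(A·C⁻¹) = 0, set J_L = A·C⁻¹, and let X ∈ M₂(ℝ) satisfy Tr(A⁻¹·X) = 0 and Tr(C⁻¹·X) = 0. Then: (i) Tr(A⁻¹·(J_L·X)) = 0 and Tr(C⁻¹·(J_L·X)) = 0 (left multiplication by J_L preserves the plane A^⊥ ∩ C^⊥); and (ii) det(J_L·X + X) = det(J_L·X) + det(X) (J_L·X is orthogonal to X for the quadratic form −det). -/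
open Matrix

/-- Cayley–Hamilton for 2×2 matrices. -/
lemma sq_eq_trace_smul_sub (M : Matrix (Fin 2) (Fin 2) ℝ) :
    M * M = M.trace • M - M.det • (1 : Matrix (Fin 2) (Fin 2) ℝ) := by
  ext i j
  fin_cases i <;> fin_cases j <;>
    simp [Matrix.mul_apply, Matrix.trace_fin_two, Matrix.det_fin_two,
      Fin.sum_univ_succ, Matrix.one_apply] <;> ring

/-- Polarization of det for 2×2 matrices. -/
lemma det_add_eq (X Y : Matrix (Fin 2) (Fin 2) ℝ) :
    (X + Y).det = X.det + Y.det + (X.adjugate * Y).trace := by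
  simp [Matrix.det_fin_two, Matrix.trace_fin_two, Matrix.adjugate_fin_two,
    Matrix.mul_apply, Fin.sum_univ_succ, Matrix.vecMul, dotProduct]
  ring

/-- Left multiplication by `J_L = A C⁻¹` preserves the tangent plane
`A^⊥ ∩ C^⊥ = {X : Tr(A⁻¹X) = Tr(C⁻¹X) = 0}`, and `J_L·X` is orthogonal to `X`
for the quadratic form `-det`. -/
theorem JL_preserves_tangent_plane (A C X : Matrix (Fin 2) (Fin 2) ℝ)
    (hA : A.det = 1) (hC : C.det = 1) (hAC : (A * C⁻¹).trace = 0)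
    (hXA : (A⁻¹ * X).trace = 0) (hXC : (C⁻¹ * X).trace = 0) :
    (A⁻¹ * ((A * C⁻¹) * X)).trace = 0 ∧
    (C⁻¹ * ((A * C⁻¹) * X)).trace = 0 ∧
    ((A * C⁻¹) * X + X).det = ((A * C⁻¹) * X).det + X.det := by
  have hAinv : Invertible A := A.invertibleOfIsUnitDet (by simp [hA])
  have hCinv : Invertible C := C.invertibleOfIsUnitDet (by simp [hC])
  have hiA : A⁻¹ * A = 1 := Matrix.nonsing_inv_mul A (by simp [hA])
  set J := A * C⁻¹ with hJ
  have hdetJ : J.det = 1 := by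
    simp [hJ, Matrix.det_mul, hA, Matrix.det_nonsing_inv, hC]
  have hJ2 : J * J = -1 := by
    rw [sq_eq_trace_smul_sub, hAC, hdetJ]; simp
  constructor
  · rw [hJ, ← Matrix.mul_assoc, ← Matrix.mul_assoc, hiA, one_mul]
    exact hXC
  constructor
  · -- C⁻¹ * J = - A⁻¹ since J² = -1, i.e. C⁻¹ * A * C⁻¹ = -A⁻¹
    have h1 : C⁻¹ * J = -A⁻¹ := by
      calc C⁻¹ * J = A⁻¹ * A * (C⁻¹ * J) := by rw [hiA, one_mul]
        _ = A⁻¹ * (J * J) := by rw [Matrix.mul_assoc, ← Matrix.mul_assoc A C⁻¹ J, ← hJ]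
        _ = -A⁻¹ := by rw [hJ2]; simp
    calc (C⁻¹ * (J * X)).trace = ((-A⁻¹) * X).trace := by
          rw [← Matrix.mul_assoc, h1]
      _ = 0 := by simp [Matrix.neg_mul, hXA]
  · rw [det_add_eq]
    have hadjJ : J.adjugate.trace = 0 := by
      have h := hAC
      rw [Matrix.trace_fin_two] at h
      rw [Matrix.eta_fin_two J, Matrix.adjugate_fin_two, Matrix.trace_fin_two]
      simpa [add_comm] using h
    have : ((J * X).adjugate * X).trace = 0 := by
      rw [Matrix.adjugate_mul_distrib, Matrix.mul_assoc,
        Matrix.trace_mul_comm, Matrix.mul_assoc, Matrix.mul_adjugate]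
      simp [hadjJ]
    rw [this, add_zero]
end

section
/- Let A, C ∈ M₂(ℝ) with det A = det C = 1 and Tr(A·C⁻¹) = 0, and set J_L = A·C⁻¹ and J_R = C⁻¹·A. Then for every X ∈ M₂(ℝ) with Tr(A⁻¹·X) = 0 and Tr(C⁻¹·X) = 0, one has X·J_R = −J_L·X. -/
open Matrix

private lemma key_identity (A C X : Matrix (Fin 2) (Fin 2) ℝ) :
    X * (C.adjugate * A) + A * C.adjugate * X =
      (C.adjugate * X).trace • A + (C.adjugate * A).trace • X
        - (A.adjugate * X).trace • C := by
  ext i j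
  fin_cases i <;> fin_cases j <;>
    simp [Matrix.adjugate_fin_two, Matrix.mul_apply, Fin.sum_univ_two,
      Matrix.trace_fin_two, Matrix.vecMul, dotProduct] <;> ring

/-- On the tangent plane `A^⊥ ∩ C^⊥`, right multiplication by `J_R = C⁻¹A`
coincides with minus left multiplication by `J_L = A C⁻¹`. -/
theorem right_JR_eq_neg_left_JL (A C : Matrix (Fin 2) (Fin 2) ℝ)
    (hA : A.det = 1) (hC : C.det = 1) (hAC : (A * C⁻¹).trace = 0) :
    ∀ X : Matrix (Fin 2) (Fin 2) ℝ,
      (A⁻¹ * X).trace = 0 → (C⁻¹ * X).trace = 0 →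
      X * (C⁻¹ * A) = -((A * C⁻¹) * X) := by
  intro X h1 h2
  have hA' : A⁻¹ = A.adjugate := by rw [Matrix.inv_def, hA]; simp
  have hC' : C⁻¹ = C.adjugate := by rw [Matrix.inv_def, hC]; simp
  rw [hA'] at h1
  rw [hC'] at h2 hAC ⊢
  have hCA : (C.adjugate * A).trace = 0 := by
    rw [Matrix.trace_mul_comm]; exact hAC
  have h := key_identity A C X
  rw [h1, h2, hCA] at h
  simp only [zero_smul, add_zero, zero_add, sub_zero, zero_sub] at h
  rw [eq_neg_iff_add_eq_zero]
  exact h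
end

section
/- (Salein's properness criterion, sufficiency.) Let Γ be a group and ρ, r : Γ → SL(2,ℝ) two group homomorphisms. Assume: (a) the action of Γ on the hyperbolic plane ℍ given by γ·z = ρ(γ)·z is properly discontinuous; (b) there exist a constant k < 1 and a map f : ℍ → ℍ with dist(f(z), f(w)) ≤ k·dist(z,w) for all z, w ∈ ℍ, satisfying the equivariance f(ρ(γ)·z) = r(γ)·f(z) for all γ ∈ Γ and z ∈ ℍ. Then the action of Γ on SL(2,ℝ) given by γ·g = ρ(γ)·g·r(γ)⁻¹ is properly discontinuous: for every compact subset K of SL(2,ℝ), the set {γ ∈ Γ : (ρ(γ)·K·r(γ)⁻¹) ∩ K ≠ ∅} is finite. -/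
open UpperHalfPlane

/-- `SL(2,ℝ)` carries the topology induced from `M₂(ℝ)`. -/
instance : TopologicalSpace (Matrix.SpecialLinearGroup (Fin 2) ℝ) :=
  TopologicalSpace.induced
    (fun g => (g : Matrix (Fin 2) (Fin 2) ℝ)) inferInstance

lemma salein_aux_denom_ne_zero (g : Matrix.SpecialLinearGroup (Fin 2) ℝ)
    (p : UpperHalfPlane) :
    ((g 1 0 : ℂ) * (p : ℂ) + (g 1 1 : ℂ)) ≠ 0 := by
  intro h
  rcases eq_or_ne (g 1 0) 0 with h0 | h0
  · have h1 : g 1 1 ≠ 0 := by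
      intro h1
      have := g.2
      rw [Matrix.det_fin_two, h0, h1] at this
      simp at this
    rw [h0] at h
    simp [h1] at h
  · have him : ((g 1 0 : ℂ) * (p : ℂ) + (g 1 1 : ℂ)).im = g 1 0 * (p : ℂ).im := by
      simp
    rw [h] at him
    have : (p : ℂ).im ≠ 0 := ne_of_gt p.2
    simp only [Complex.zero_im] at him
    exact (mul_ne_zero h0 this) him.symm

lemma salein_aux_continuous_smul (p : UpperHalfPlane) :
    Continuous (fun g : Matrix.SpecialLinearGroup (Fin 2) ℝ => g • p) := by
  rw [UpperHalfPlane.isEmbedding_coe.continuous_iff]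
  have hentry : ∀ i j : Fin 2, Continuous
      (fun g : Matrix.SpecialLinearGroup (Fin 2) ℝ => ((g i j : ℝ) : ℂ)) := by
    intro i j
    exact Complex.continuous_ofReal.comp
      ((continuous_apply j).comp ((continuous_apply i).comp continuous_induced_dom))
  have hnum : Continuous (fun g : Matrix.SpecialLinearGroup (Fin 2) ℝ =>
      (g 0 0 : ℂ) * (p : ℂ) + (g 0 1 : ℂ)) :=
    ((hentry 0 0).mul continuous_const).add (hentry 0 1)
  have hden : Continuous (fun g : Matrix.SpecialLinearGroup (Fin 2) ℝ =>
      (g 1 0 : ℂ) * (p : ℂ) + (g 1 1 : ℂ)) :=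
    ((hentry 1 0).mul continuous_const).add (hentry 1 1)
  have : (fun g : Matrix.SpecialLinearGroup (Fin 2) ℝ => ((g • p : UpperHalfPlane) : ℂ)) =
      fun g => ((g 0 0 : ℂ) * (p : ℂ) + (g 0 1 : ℂ)) /
        ((g 1 0 : ℂ) * (p : ℂ) + (g 1 1 : ℂ)) := by
    funext g
    rw [UpperHalfPlane.specialLinearGroup_apply]
    simp [UpperHalfPlane.coe_mk]
  show Continuous fun g : Matrix.SpecialLinearGroup (Fin 2) ℝ =>
    ((g • p : UpperHalfPlane) : ℂ)
  rw [this]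
  exact hnum.div hden fun g => salein_aux_denom_ne_zero g p

/-- Salein's properness criterion (sufficiency): if `Γ` acts properly
discontinuously on `ℍ` through a representation `ρ : Γ → SL(2,ℝ)`, and there is
a `(ρ,r)`-equivariant `k`-contracting map `f : ℍ → ℍ` with `k < 1`, then the
action `γ·g = ρ(γ) g r(γ)⁻¹` of `Γ` on `SL(2,ℝ) ≅ AdS^{1,2}` is properly
discontinuous. -/
theorem salein_properness_criterion {Γ : Type*} [Group Γ]
    (ρ r : Γ →* Matrix.SpecialLinearGroup (Fin 2) ℝ)
    (hρ : ∀ K : Set UpperHalfPlane, IsCompact K →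
      {γ : Γ | ((fun z => ρ γ • z) '' K ∩ K).Nonempty}.Finite)
    (hf : ∃ k : ℝ, k < 1 ∧ ∃ f : UpperHalfPlane → UpperHalfPlane,
      (∀ z w : UpperHalfPlane, dist (f z) (f w) ≤ k * dist z w) ∧
      (∀ (γ : Γ) (z : UpperHalfPlane), f (ρ γ • z) = r γ • f z)) :
    ∀ K : Set (Matrix.SpecialLinearGroup (Fin 2) ℝ), IsCompact K →
      {γ : Γ | ((fun g => ρ γ * g * (r γ)⁻¹) '' K ∩ K).Nonempty}.Finite := by
  obtain ⟨k, hk1, f, hcontr, hequiv⟩ := hf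
  -- `f` is a contraction, so it has a fixed point `p`
  have hlip : LipschitzWith (Real.toNNReal k) f := by
    apply LipschitzWith.of_dist_le_mul
    intro x y
    calc dist (f x) (f y) ≤ k * dist x y := hcontr x y
    _ ≤ Real.toNNReal k * dist x y :=
      mul_le_mul_of_nonneg_right (Real.le_coe_toNNReal k) dist_nonneg
  have hck : ContractingWith (Real.toNNReal k) f := by
    refine ⟨?_, hlip⟩
    rw [← NNReal.coe_lt_coe, NNReal.coe_one, Real.coe_toNNReal']
    exact max_lt hk1 zero_lt_one
  haveI : Nonempty UpperHalfPlane := ⟨UpperHalfPlane.I⟩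
  set p : UpperHalfPlane := ContractingWith.fixedPoint f hck with hpdef
  have hp : f p = p := hck.fixedPoint_isFixedPt
  intro K hK
  rcases K.eq_empty_or_nonempty with hKe | hKne
  · subst hKe
    simp
  -- bound `C` on `dist (g • p) p` for `g ∈ K`
  obtain ⟨g₀, hg₀K, hg₀⟩ : ∃ g₀ ∈ K, ∀ g ∈ K, dist (g • p) p ≤ dist (g₀ • p) p := by
    obtain ⟨g₀, hg₀K, hmax⟩ := hK.exists_isMaxOn hKne
      (Continuous.dist (salein_aux_continuous_smul p) continuous_const).continuousOn
    exact ⟨g₀, hg₀K, fun g hg => hmax hg⟩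
  set C : ℝ := dist (g₀ • p) p with hCdef
  have hC0 : 0 ≤ C := dist_nonneg
  have h1k : (0:ℝ) < 1 - k := by linarith
  set R : ℝ := 2 * C / (1 - k) with hRdef
  have hR0 : 0 ≤ R := div_nonneg (by linarith) h1k.le
  set B : Set UpperHalfPlane := Metric.closedBall p R with hBdef
  have hpB : p ∈ B := Metric.mem_closedBall_self hR0
  have hBc : IsCompact B := isCompact_closedBall p R
  refine Set.Finite.subset (hρ B hBc) ?_
  intro γ hγ
  obtain ⟨x, ⟨g, hgK, hx⟩, hxK⟩ := hγ
  -- `x = ρ γ * g * (r γ)⁻¹ ∈ K`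
  -- key estimate: `dist (ρ γ • p) p ≤ R`
  set D : ℝ := dist ((ρ γ : Matrix.SpecialLinearGroup (Fin 2) ℝ) • p) p with hDdef
  have h1 : dist ((r γ : Matrix.SpecialLinearGroup (Fin 2) ℝ) • p) p ≤ k * D := by
    calc dist ((r γ : Matrix.SpecialLinearGroup (Fin 2) ℝ) • p) p
        = dist ((r γ : Matrix.SpecialLinearGroup (Fin 2) ℝ) • f p) (f p) := by rw [hp]
      _ = dist (f ((ρ γ : Matrix.SpecialLinearGroup (Fin 2) ℝ) • p)) (f p) := by
          rw [hequiv γ p]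
      _ ≤ k * dist ((ρ γ : Matrix.SpecialLinearGroup (Fin 2) ℝ) • p) p := hcontr _ _
  have hρeq : (ρ γ : Matrix.SpecialLinearGroup (Fin 2) ℝ) = x * r γ * g⁻¹ := by
    rw [← hx]; group
  have h2 : D ≤ dist (g • p) p + dist ((r γ : Matrix.SpecialLinearGroup (Fin 2) ℝ) • p) p
      + dist (x • p) p := by
    have e1 : (ρ γ : Matrix.SpecialLinearGroup (Fin 2) ℝ) • p = x • (r γ : Matrix.SpecialLinearGroup (Fin 2) ℝ) • g⁻¹ • p := by
      rw [hρeq, mul_smul, mul_smul]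
    calc D = dist (x • (r γ : Matrix.SpecialLinearGroup (Fin 2) ℝ) • g⁻¹ • p) p := by
          rw [hDdef, e1]
      _ ≤ dist (x • (r γ : Matrix.SpecialLinearGroup (Fin 2) ℝ) • g⁻¹ • p)
            (x • (r γ : Matrix.SpecialLinearGroup (Fin 2) ℝ) • p)
          + dist (x • (r γ : Matrix.SpecialLinearGroup (Fin 2) ℝ) • p) (x • p)
          + dist (x • p) p := dist_triangle4 _ _ _ _
      _ = dist (g⁻¹ • p) p + dist ((r γ : Matrix.SpecialLinearGroup (Fin 2) ℝ) • p) p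
          + dist (x • p) p := by rw [dist_smul, dist_smul, dist_smul]
      _ = dist (g • p) p + dist ((r γ : Matrix.SpecialLinearGroup (Fin 2) ℝ) • p) p
          + dist (x • p) p := by
            congr 2
            calc dist (g⁻¹ • p) p = dist (g • g⁻¹ • p) (g • p) := (dist_smul g _ _).symm
              _ = dist (g • p) p := by rw [smul_inv_smul]; exact dist_comm _ _
  have hD : D ≤ R := by
    have hgC : dist (g • p) p ≤ C := hg₀ g hgK
    have hxC : dist (x • p) p ≤ C := hg₀ x hxK
    have : D ≤ C + k * D + C := by linarith [h2, h1]
    rw [hRdef, le_div_iff₀ h1k]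
    nlinarith
  exact ⟨(ρ γ : Matrix.SpecialLinearGroup (Fin 2) ℝ) • p,
    ⟨p, hpB, rfl⟩, Metric.mem_closedBall.2 hD⟩
end

section
/- Let g ∈ M₂(ℝ) with det g = 1, and let J₁, J₂ ∈ M₂(ℝ) satisfy J₁² = J₂² = −Id. Then there exists C ∈ M₂(ℝ) with det C = 1, Tr(g·C⁻¹) = 0, g·C⁻¹ = J₁ and C⁻¹·g = J₂, if and only if J₁·g = g·J₂. (In the identification of the space of timelike geodesics of AdS^{1,2} with pairs of complex structures — equivalently with ℍ²×ℍ² — the set of timelike geodesics passing through the point g ∈ SL(2,ℝ) ≅ AdS^{1,2} is exactly the graph of g.) -/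
open Matrix

lemma cx_struct_trace_det (J : Matrix (Fin 2) (Fin 2) ℝ) (hJ : J * J = -1) :
    J.trace = 0 ∧ J.det = 1 := by
  have h00 : (J * J) 0 0 = (-1 : Matrix (Fin 2) (Fin 2) ℝ) 0 0 := by rw [hJ]
  have h01 : (J * J) 0 1 = (-1 : Matrix (Fin 2) (Fin 2) ℝ) 0 1 := by rw [hJ]
  have h10 : (J * J) 1 0 = (-1 : Matrix (Fin 2) (Fin 2) ℝ) 1 0 := by rw [hJ]
  have h11 : (J * J) 1 1 = (-1 : Matrix (Fin 2) (Fin 2) ℝ) 1 1 := by rw [hJ]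
  simp [Matrix.mul_apply, Fin.sum_univ_two, Matrix.neg_apply, Matrix.one_apply] at h00 h01 h10 h11
  have htr : J 0 0 + J 1 1 = 0 := by
    by_contra hs
    have hb : J 0 1 = 0 := by
      rcases mul_eq_zero.mp (show J 0 1 * (J 0 0 + J 1 1) = 0 by nlinarith) with h | h
      · exact h
      · exact absurd h hs
    have hc : J 1 0 = 0 := by
      rcases mul_eq_zero.mp (show J 1 0 * (J 0 0 + J 1 1) = 0 by nlinarith) with h | h
      · exact h
      · exact absurd h hs
    nlinarith [sq_nonneg (J 0 0)]
  constructor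
  · rw [Matrix.trace_fin_two]; exact htr
  · rw [Matrix.det_fin_two]; nlinarith

/-- In the identification of timelike geodesics of `AdS^{1,2}` with pairs of
complex structures, the timelike geodesics through `g ∈ SL(2,ℝ) ≅ AdS^{1,2}`
are exactly the pairs `(J₁, J₂)` with `J₁·g = g·J₂`, i.e. the graph of `g`. -/
theorem timelike_geodesics_through_point (g J₁ J₂ : Matrix (Fin 2) (Fin 2) ℝ)
    (hg : g.det = 1) (hJ₁ : J₁ * J₁ = -1) (hJ₂ : J₂ * J₂ = -1) :
    (∃ C : Matrix (Fin 2) (Fin 2) ℝ, C.det = 1 ∧ (g * C⁻¹).trace = 0 ∧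
      g * C⁻¹ = J₁ ∧ C⁻¹ * g = J₂) ↔ J₁ * g = g * J₂ := by
  obtain ⟨htr₁, hdet₁⟩ := cx_struct_trace_det J₁ hJ₁
  have hgu : IsUnit g.det := by rw [hg]; exact isUnit_one
  have hginv : g * g⁻¹ = 1 := Matrix.mul_nonsing_inv g hgu
  have hginv' : g⁻¹ * g = 1 := Matrix.nonsing_inv_mul g hgu
  constructor
  · rintro ⟨C, hC, htr, h1, h2⟩
    calc J₁ * g = g * C⁻¹ * g := by rw [h1]
    _ = g * (C⁻¹ * g) := by rw [Matrix.mul_assoc]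
    _ = g * J₂ := by rw [h2]
  · intro hcomm
    refine ⟨-(J₁ * g), ?_, ?_, ?_, ?_⟩
    · rw [Matrix.det_neg, Matrix.det_mul, hdet₁, hg]
      norm_num
    all_goals {
      have hCinv : (-(J₁ * g))⁻¹ = g⁻¹ * J₁ := by
        apply Matrix.inv_eq_right_inv
        calc -(J₁ * g) * (g⁻¹ * J₁) = -(J₁ * (g * g⁻¹) * J₁) := by noncomm_ring
        _ = 1 := by rw [hginv, Matrix.mul_one, hJ₁]; simp
      rw [hCinv]
      first
      | (rw [← Matrix.mul_assoc, hginv, Matrix.one_mul]; try exact htr₁)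
      | (rw [Matrix.mul_assoc, hcomm, ← Matrix.mul_assoc, hginv', Matrix.one_mul])
    }
end
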